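/- arXiv:2104.05625 — 5 statements merged into one kernel-verified Lean document; each statement's English description precedes it below -/
import Mathlib

section
/- Let M be a commutative ℚ(q)-algebra and B ∈ M. Define w_m(x) ∈ M[x] by w_0 = 1, w_1 = x, and x·w_m = w_{m+1} + B(1-q^{2m}) w_{m-1}. Define v_m(x) = Σ_{k=0}^{⌊m/2⌋} (-1)^k q^k η(k) · ([m]_q! / ([m-2k]_q! [k]_q!)) · w_{m-2k}(x), where η(k) = (q-q^{-1})^k q^{-k(k+1)/2} B^k. Then the v_m satisfy the recursion x·v_m = v_{m+1} + B(1-q^{-2m}) v_{m-1} with v_0 = 1 and v_1 = x. -/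
open Polynomial Finset

noncomputable section

/-- The indeterminate `q` in `ℚ(q)`. -/
def q : RatFunc ℚ := RatFunc.X

/-- The balanced quantum integer `[m]_q = (q^m - q^{-m})/(q - q^{-1})`. -/
def qnum (m : ℕ) : RatFunc ℚ := (q ^ (m : ℤ) - q ^ (-(m : ℤ))) / (q - q⁻¹)

/-- The balanced quantum factorial `[m]_q!`. -/
def qfact : ℕ → RatFunc ℚ
  | 0 => 1
  | n + 1 => qfact n * qnum (n + 1)

/-!
Write `c(m,k)` for the coefficient of `B^k w_{m-2k}` in `v_m`. Multiplying `v_m` by `x` and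
applying the recursion of the `w`'s termwise, the recursion of the `v`'s becomes, coefficient by
coefficient, the scalar identity
`c(m,k+1) + (1 - q^{2(m-2k)}) c(m,k) = c(m+1,k+1) + (1 - q^{-2m}) c(m-1,k)`.
Once `[m]_q!/[m-2k]_q!` is written as the falling product `[m]_q ⋯ [m-2k+1]_q`, all four terms are
`c(m-1,k)` times simple quantum integers, and the identity reduces to
`[d+2b]_q - [d]_q = [b]_q (q^{d+b} + q^{-(d+b)})`.
-/

section
variable {K M : Type*} [CommRing K] [CommRing M] [Algebra K M]

def wSum (B : M) (w : ℕ → M[X]) (c : ℕ → ℕ → K) (m : ℕ) : M[X] :=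
  ∑ k ∈ range (m / 2 + 1), C (c m k • B ^ k) * w (m - 2 * k)

variable {B : M} {w : ℕ → M[X]} {c : ℕ → ℕ → K}

lemma wSum_eq_sum_range {m N : ℕ} (hc : ∀ k, m < 2 * k → c m k = 0) (hN : m / 2 + 1 ≤ N) :
    wSum B w c m = ∑ k ∈ range N, C (c m k • B ^ k) * w (m - 2 * k) := by
  refine sum_subset (range_subset_range.2 hN) fun k _ hk => ?_
  rw [hc k (by simp only [mem_range] at hk; omega), zero_smul, C_0, zero_mul]

lemma C_smul_pow_mul_C_smul (a b : K) (k : ℕ) :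
    C (a • B ^ k) * C (b • B) = C ((b * a) • B ^ (k + 1)) := by
  rw [← C_mul, smul_mul_smul_comm, pow_succ, mul_comm a]

lemma sum_range_succ_add_sum_shift (a b : ℕ → K) (g : ℕ → M[X]) (N : ℕ) :
    ∑ k ∈ range (N + 1), C (a k • B ^ k) * g k + ∑ k ∈ range N, C (b k • B ^ (k + 1)) * g (k + 1) =
      C (a 0 • 1) * g 0 + ∑ k ∈ range N, C ((a (k + 1) + b k) • B ^ (k + 1)) * g (k + 1) := by
  simp only [sum_range_succ', pow_zero, add_smul, C_add, add_mul, sum_add_distrib]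
  ring

theorem X_mul_wSum (α : ℕ → K) (β : K) (m : ℕ)
    (hw : ∀ n, X * w n = w (n + 1) + C (α n • B) * w (n - 1))
    (hc : ∀ n k, n < 2 * k → c n k = 0) (h0 : c m 0 = c (m + 1) 0)
    (hrec : ∀ k, c m (k + 1) + α (m - 2 * k) * c m k = c (m + 1) (k + 1) + β * c (m - 1) k) :
    X * wSum B w c m = wSum B w c (m + 1) + C (β • B) * wSum B w c (m - 1) := by
  set N := m / 2 + 1
  have hL : X * wSum B w c m = ∑ k ∈ range (N + 1), C (c m k • B ^ k) * w (m + 1 - 2 * k) +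
      ∑ k ∈ range N, C ((α (m - 2 * k) * c m k) • B ^ (k + 1)) * w (m + 1 - 2 * (k + 1)) := by
    rw [sum_range_succ, hc m N (by omega), zero_smul, C_0, zero_mul, add_zero, ← sum_add_distrib,
      wSum, mul_sum]
    refine sum_congr rfl fun k hk => ?_
    have hk : 2 * k ≤ m := by simp only [mem_range] at hk; omega
    rw [mul_left_comm, hw, mul_add, ← mul_assoc, C_smul_pow_mul_C_smul,
      show m - 2 * k + 1 = m + 1 - 2 * k by omega,
      show m - 2 * k - 1 = m + 1 - 2 * (k + 1) by omega]
  have hR : wSum B w c (m + 1) + C (β • B) * wSum B w c (m - 1) =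
      ∑ k ∈ range (N + 1), C (c (m + 1) k • B ^ k) * w (m + 1 - 2 * k) +
      ∑ k ∈ range N, C ((β * c (m - 1) k) • B ^ (k + 1)) * w (m + 1 - 2 * (k + 1)) := by
    rw [wSum_eq_sum_range (hc _) (N := N + 1) (by omega),
      wSum_eq_sum_range (hc _) (N := N) (by omega), mul_sum]
    refine congrArg _ (sum_congr rfl fun k _ => ?_)
    rw [← mul_assoc, mul_comm (C _), C_smul_pow_mul_C_smul,
      show m - 1 - 2 * k = m + 1 - 2 * (k + 1) by omega]
  rw [hL, hR, sum_range_succ_add_sum_shift, sum_range_succ_add_sum_shift, h0]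
  simp only [hrec]

end


lemma q_ne_zero : q ≠ 0 := RatFunc.X_ne_zero

lemma q_pow_ne_one {n : ℕ} (hn : n ≠ 0) : q ^ n ≠ 1 := fun h =>
  RatFunc.transcendental_X ⟨X ^ n - C (1 : ℚ), X_pow_sub_C_ne_zero (Nat.pos_of_ne_zero hn) 1,
    by simp [← h, q]⟩

lemma q_sub_q_inv_ne_zero : q - q⁻¹ ≠ 0 := by
  intro h
  apply q_pow_ne_one two_ne_zero
  field_simp [q_ne_zero] at h
  linear_combination h

lemma qnum_ne_zero {n : ℕ} (hn : n ≠ 0) : qnum n ≠ 0 := by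
  refine div_ne_zero (fun h => q_pow_ne_one (n := 2 * n) (by omega) ?_) q_sub_q_inv_ne_zero
  rw [zpow_neg, zpow_natCast, sub_eq_zero] at h
  field_simp [q_ne_zero] at h
  rw [pow_mul']; linear_combination h

lemma qfact_ne_zero (n : ℕ) : qfact n ≠ 0 := by
  induction n with
  | zero => exact one_ne_zero
  | succ n ih => exact mul_ne_zero ih (qnum_ne_zero n.succ_ne_zero)

lemma qnum_zero : qnum 0 = 0 := by simp [qnum]

lemma one_sub_q_pow_two_mul (n : ℕ) : 1 - q ^ (2 * n) = -(q ^ n * (q - q⁻¹) * qnum n) := by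
  rw [qnum, mul_assoc, mul_div_cancel₀ _ q_sub_q_inv_ne_zero, zpow_neg, zpow_natCast]
  field_simp [q_ne_zero]
  ring

lemma one_sub_q_zpow_neg_two_mul (n : ℕ) :
    1 - q ^ (-((2 * n : ℕ) : ℤ)) = (q ^ n)⁻¹ * (q - q⁻¹) * qnum n := by
  rw [qnum, mul_assoc, mul_div_cancel₀ _ q_sub_q_inv_ne_zero]
  simp only [zpow_neg, zpow_natCast]
  field_simp [q_ne_zero]
  ring

lemma qnum_add_two_mul_sub (d b : ℕ) :
    qnum (d + 2 * b) - qnum d = qnum b * (q ^ (d + b) + (q ^ (d + b))⁻¹) := by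
  simp only [qnum, zpow_neg, zpow_natCast]
  field_simp [q_ne_zero]
  ring

/-- `[m]_q [m-1]_q ⋯ [m-n+1]_q`, which equals `[m]_q! / [m-n]_q!` for `n ≤ m` but, unlike that
quotient, vanishes for `n > m` (truncated subtraction then produces the factor `[0]_q = 0`). -/
def qdesc (m n : ℕ) : RatFunc ℚ := ∏ i ∈ range n, qnum (m - i)

lemma qdesc_succ_right (m n : ℕ) : qdesc m (n + 1) = qdesc m n * qnum (m - n) :=
  prod_range_succ _ _

lemma qdesc_succ_succ (m n : ℕ) : qdesc (m + 1) (n + 1) = qnum (m + 1) * qdesc m n := by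
  rw [qdesc, prod_range_succ', mul_comm]
  simp [qdesc]

lemma qdesc_eq_zero_of_lt {m n : ℕ} (h : m < n) : qdesc m n = 0 :=
  prod_eq_zero (mem_range.2 h) (by simp [qnum_zero])

lemma qfact_eq_qfact_sub_mul_qdesc {m n : ℕ} (h : n ≤ m) :
    qfact m = qfact (m - n) * qdesc m n := by
  induction n with
  | zero => simp [qdesc]
  | succ n ih =>
    rw [ih (by omega), qdesc_succ_right, show m - n = m - (n + 1) + 1 by omega, qfact]
    ring

/-- The scalar `(-1)^k q^k η(k) / B^k` of the paper. -/
def qeta (k : ℕ) : RatFunc ℚ :=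
  (-1 : RatFunc ℚ) ^ k * q ^ k * ((q - q⁻¹) ^ k * q ^ (-((k * (k + 1) / 2 : ℕ) : ℤ)))

lemma qeta_succ (k : ℕ) : qeta (k + 1) = -((q - q⁻¹) * (q ^ k)⁻¹) * qeta k := by
  have htri : (k + 1) * (k + 1 + 1) / 2 = k * (k + 1) / 2 + (k + 1) := by
    have : (k + 1) * (k + 1 + 1) = k * (k + 1) + 2 * (k + 1) := by ring
    omega
  simp only [qeta, htri, zpow_neg, zpow_natCast, pow_add, pow_succ]
  field_simp [q_ne_zero]

def vCoeff (m k : ℕ) : RatFunc ℚ := qeta k * (qdesc m (2 * k) / qfact k)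

lemma vCoeff_zero_right (m : ℕ) : vCoeff m 0 = 1 := by
  simp [vCoeff, qeta, qdesc, qfact]

lemma vCoeff_eq_zero_of_lt {m k : ℕ} (h : m < 2 * k) : vCoeff m k = 0 := by
  simp [vCoeff, qdesc_eq_zero_of_lt h]

lemma qfact_div_eq_vCoeff {m k : ℕ} (h : 2 * k ≤ m) :
    qeta k * (qfact m / (qfact (m - 2 * k) * qfact k)) = vCoeff m k := by
  rw [vCoeff, qfact_eq_qfact_sub_mul_qdesc h, mul_div_mul_left _ _ (qfact_ne_zero _)]

lemma vCoeff_rec (n k : ℕ) :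
    vCoeff (n + 1) (k + 1) + (1 - q ^ (2 * (n + 1 - 2 * k))) * vCoeff (n + 1) k =
      vCoeff (n + 2) (k + 1) + (1 - q ^ (-((2 * (n + 1) : ℕ) : ℤ))) * vCoeff n k := by
  set P := vCoeff n k
  have h1 : vCoeff (n + 1) (k + 1) =
      -((q - q⁻¹) * (q ^ k)⁻¹) * qnum (n + 1) * qnum (n - 2 * k) / qnum (k + 1) * P := by
    simp only [P, vCoeff, qeta_succ, qfact, mul_add, mul_one, qdesc_succ_succ, qdesc_succ_right]
    ring
  have h2 : (1 - q ^ (2 * (n + 1 - 2 * k))) * vCoeff (n + 1) k =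
      -(q ^ (n + 1 - 2 * k) * (q - q⁻¹) * qnum (n + 1)) * P := by
    have hdesc := qdesc_succ_right (n + 1) (2 * k)
    rw [qdesc_succ_succ] at hdesc
    simp only [P, vCoeff, one_sub_q_pow_two_mul]
    linear_combination (q ^ (n + 1 - 2 * k) * (q - q⁻¹) * qeta k / qfact k) * hdesc
  have h3 : vCoeff (n + 2) (k + 1) =
      -((q - q⁻¹) * (q ^ k)⁻¹) * qnum (n + 2) * qnum (n + 1) / qnum (k + 1) * P := by
    simp only [P, vCoeff, qeta_succ, qfact, mul_add, mul_one, qdesc_succ_succ]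
    ring
  rw [h1, h2, h3, one_sub_q_zpow_neg_two_mul]
  rcases lt_or_ge n (2 * k) with hlt | hle
  · simp [P, vCoeff_eq_zero_of_lt hlt]
  obtain ⟨d, rfl⟩ : ∃ d, n = d + 2 * k := ⟨n - 2 * k, by omega⟩
  rw [show d + 2 * k - 2 * k = d by omega, show d + 2 * k + 1 - 2 * k = d + 1 by omega,
    show d + 2 * k + 2 = d + 2 * (k + 1) by ring,
    sub_eq_iff_eq_add'.1 (qnum_add_two_mul_sub d (k + 1))]
  field_simp [q_ne_zero, qnum_ne_zero k.succ_ne_zero]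
  ring

/-- the polynomials `v_m` defined from the `w_m` by the explicit
formula with `η(k) = (q-q^{-1})^k q^{-k(k+1)/2} B^k` satisfy the recursion
`x v_m = v_{m+1} + B (1 - q^{-2m}) v_{m-1}` with `v_0 = 1`, `v_1 = x`. -/
theorem stmt2 {M : Type*} [CommRing M] [Algebra (RatFunc ℚ) M] (B : M)
    (w : ℕ → Polynomial M)
    (hw0 : w 0 = 1) (hw1 : w 1 = X)
    (hwrec : ∀ m : ℕ, 1 ≤ m →
      X * w m = w (m + 1) + C ((1 - q ^ (2 * m)) • B) * w (m - 1))
    (v : ℕ → Polynomial M)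
    (hv : ∀ m : ℕ, v m = ∑ k ∈ range (m / 2 + 1),
      C ((((-1 : RatFunc ℚ) ^ k * q ^ k * ((q - q⁻¹) ^ k * q ^ (-((k * (k + 1) / 2 : ℕ) : ℤ))) *
        (qfact m / (qfact (m - 2 * k) * qfact k)))) • B ^ k) * w (m - 2 * k)) :
    v 0 = 1 ∧ v 1 = X ∧ ∀ m : ℕ, 1 ≤ m →
      X * v m = v (m + 1) + C ((1 - q ^ (-((2 * m : ℕ) : ℤ))) • B) * v (m - 1) := by
  have hv' (m : ℕ) : v m = wSum B w vCoeff m := by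
    rw [hv, wSum]
    refine sum_congr rfl fun k hk => ?_
    exact congrArg (fun c => C (c • B ^ k) * w (m - 2 * k))
      (qfact_div_eq_vCoeff (by simp only [mem_range] at hk; omega))
  have hw (n : ℕ) : X * w n = w (n + 1) + C ((1 - q ^ (2 * n)) • B) * w (n - 1) := by
    rcases n with _ | n
    · simp [hw0, hw1]
    · exact hwrec _ n.succ_pos
  refine ⟨by simp [hv', wSum, vCoeff_zero_right, hw0], by simp [hv', wSum, vCoeff_zero_right, hw1],
    fun m hm => ?_⟩
  obtain ⟨n, rfl⟩ : ∃ n, m = n + 1 := ⟨m - 1, by omega⟩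
  simp only [hv']
  exact X_mul_wSum (fun n => 1 - q ^ (2 * n)) _ _ hw (fun _ _ => vCoeff_eq_zero_of_lt)
    (by simp only [vCoeff_zero_right]) (vCoeff_rec n)
end
end

section
/- For the deformed Chebyshev polynomials C_n(x;q,r) (defined by C_0=1, C_1=2x, C_{n+1} = 2x C_n − ((r^{-1}−q^{n+1})/(1−q^{n+1})) C_{n-1}), the rescaled polynomial (1−q^2)(1−q^3)⋯(1−q^n) · C_n(x;q,r) lies in ℤ[x, q, r^{-1}] for all n ≥ 2. -/
/-!
Multiplying the recurrence by `N (n+1) = N n * (1 - q^(n+1))`, where `N n = ∏_{j=2}^n (1 - q^j)`,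
turns its coefficient `(s - q^(n+1)) / (1 - q^(n+1))` into the polynomial `s - q^(n+1)`. So an
induction on `n ≥ 1` carrying both `N n * C_n` and `N n * C_(n-1)` stays in `ℤ[q, s][x]`. The second
term is needed because the recurrence pairs `N (n+1)` with `C_(n-1)`, and `N 1 = N 0`.
-/

open Polynomial

noncomputable section

/-- The field `ℚ(q, s)` where `s = r⁻¹`, realized as the fraction field of
`ℤ[q, s]`. -/
abbrev K7 : Type := FractionRing (MvPolynomial (Fin 2) ℤ)

/-- The indeterminate `q`. -/
def q7 : K7 := algebraMap (MvPolynomial (Fin 2) ℤ) K7 (MvPolynomial.X 0)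

/-- The indeterminate `s = r⁻¹`. -/
def s7 : K7 := algebraMap (MvPolynomial (Fin 2) ℤ) K7 (MvPolynomial.X 1)

theorem Polynomial.C_mul_mem_of_three_term_recurrence {K : Type*} [CommRing K]
    (S : Subring K[X]) (Ch : ℕ → K[X]) (N d c : ℕ → K) (hX : X ∈ S)
    (hd : ∀ n, C (d n) ∈ S) (hdc : ∀ n, 1 ≤ n → C (d (n + 1) * c n) ∈ S)
    (hN : ∀ n, 1 ≤ n → N (n + 1) = N n * d (n + 1))
    (h0 : C (N 1) * Ch 0 ∈ S) (h1 : C (N 1) * Ch 1 ∈ S)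
    (hrec : ∀ n, 1 ≤ n → Ch (n + 1) = 2 * X * Ch n - C (c n) * Ch (n - 1)) :
    ∀ n, 1 ≤ n → C (N n) * Ch n ∈ S ∧ C (N n) * Ch (n - 1) ∈ S := by
  intro n hn
  induction n, hn using Nat.le_induction with
  | base => exact ⟨h1, h0⟩
  | succ n hn ih =>
    obtain ⟨hcur, hprev⟩ := ih
    have hNC : C (N (n + 1)) = C (d (n + 1)) * C (N n) := by rw [hN n hn, C_mul, mul_comm]
    refine ⟨?_, ?_⟩
    · have hsplit : C (N (n + 1)) * Ch (n + 1) =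
          C (d (n + 1)) * (2 * X) * (C (N n) * Ch n) -
            C (d (n + 1) * c n) * (C (N n) * Ch (n - 1)) := by
        rw [hrec n hn, hNC, C_mul]
        ring
      rw [hsplit]
      exact S.sub_mem (S.mul_mem (S.mul_mem (hd _) (S.mul_mem (ofNat_mem S 2) hX)) hcur)
        (S.mul_mem (hdc n hn) hprev)
    · rw [Nat.add_sub_cancel, hNC, mul_assoc]
      exact S.mul_mem (hd _) hcur

lemma one_sub_q7_pow_ne_zero {k : ℕ} (hk : k ≠ 0) : (1 : K7) - q7 ^ k ≠ 0 := by
  have hinj := IsFractionRing.injective (MvPolynomial (Fin 2) ℤ) K7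
  intro h
  have hA : (1 : MvPolynomial (Fin 2) ℤ) - MvPolynomial.X 0 ^ k = 0 :=
    hinj (by simpa [q7] using h)
  simpa [zero_pow hk] using congrArg (MvPolynomial.eval fun _ => (0 : ℤ)) hA

/-- multiplying the deformed Chebyshev polynomial `C_n(x;q,r)` by
`(1-q^2)⋯(1-q^n)` clears all denominators: the result is the image of a
polynomial with coefficients in `ℤ[q, r⁻¹]`. -/
theorem stmt7 (Ch : ℕ → Polynomial K7)
    (h0 : Ch 0 = 1) (h1 : Ch 1 = 2 * X)
    (hrec : ∀ n : ℕ, 1 ≤ n → Ch (n + 1) =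
      2 * X * Ch n - C ((s7 - q7 ^ (n + 1)) / (1 - q7 ^ (n + 1))) * Ch (n - 1)) :
    ∀ n : ℕ, 2 ≤ n → ∃ P : Polynomial (MvPolynomial (Fin 2) ℤ),
      P.map (algebraMap (MvPolynomial (Fin 2) ℤ) K7) =
        C (∏ j ∈ Finset.Icc 2 n, (1 - q7 ^ j)) * Ch n := by
  let φ := algebraMap (MvPolynomial (Fin 2) ℤ) K7
  have hq : φ (MvPolynomial.X 0) = q7 := rfl
  have hs : φ (MvPolynomial.X 1) = s7 := rfl
  have hC : ∀ a, C (φ a) ∈ (mapRingHom φ).range := fun a => ⟨C a, map_C φ⟩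
  have hmain := C_mul_mem_of_three_term_recurrence (mapRingHom φ).range Ch
    (fun n => ∏ j ∈ Finset.Icc 2 n, (1 - q7 ^ j)) (fun n => 1 - q7 ^ n)
    (fun n => (s7 - q7 ^ (n + 1)) / (1 - q7 ^ (n + 1))) ⟨X, map_X φ⟩
    (fun n => by simpa only [map_sub, map_one, map_pow, hq] using hC (1 - .X 0 ^ n))
    (fun n _ => by
      rw [mul_div_cancel₀ _ (one_sub_q7_pow_ne_zero n.succ_ne_zero)]
      simpa only [map_sub, map_pow, hq, hs] using hC (.X 1 - .X 0 ^ (n + 1)))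
    (fun n hn => Finset.prod_Icc_succ_top (by omega) _)
    (by simp [h0]) (by simpa [h1] using ⟨2 * X, by simp⟩) hrec
  intro n hn
  exact (hmain n (by omega)).1
end
end

section
/- Define H_{m,n}(x,y;q,r) by H_{0,n}(x,y;q,r) = H_n(y;q) and the recursion 2x H_{m,n} = H_{m+1,n} + (1−q^m)H_{m-1,n} + q^m(1−q^n) r H_{m,n-1} (with H_{-1,n} = H_{m,-1} = 0). Then for all m,n ∈ ℕ, H_{m,n}(x,x;q,1) = H_{m+n}(x;q), where H_k(x;q) are the continuous q-Hermite polynomials. -/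
/-!
Putting `y = x` and `r = 1`, the two lowering terms of the bivariate recursion combine, since
`(1 - q^m) + q^m (1 - q^n) = 1 - q^(m+n)`, into the lowering term of the univariate recursion at
index `m + n`. Hence `m ↦ H_{m+n}` satisfies the same three-term recursion in `m` as
`m ↦ H_{m,n}(x,x;q,1)`, with the same initial row `H_{0,n} = H_n`.
-/

open Polynomial

section Recurrence

variable {R A : Type*} [CommRing R] [Ring A] [Algebra R A]

theorem one_sub_pow_add_pow_mul_one_sub_pow (q : R) (m n : ℕ) :
    1 - q ^ m + q ^ m * (1 - q ^ n) = 1 - q ^ (m + n) := by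
  ring

/-- The coefficient `1 - q^k` vanishes at `k = 0`, which neutralises the truncated index `k - 1`. -/
theorem one_sub_pow_smul_congr (q : R) {k : ℕ} {a b : A} (h : k ≠ 0 → a = b) :
    (1 - q ^ k) • a = (1 - q ^ k) • b := by
  rcases eq_or_ne k 0 with rfl | hk
  · simp
  · rw [h hk]

theorem eq_add_of_bivariate_qHermite_recurrence (q : R) (x : A) (P : ℕ → A)
    (hP : ∀ k, 2 * x * P k = P (k + 1) + (1 - q ^ k) • P (k - 1))
    (B : ℕ → ℕ → A) (hB0 : ∀ n, B 0 n = P n)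
    (hB : ∀ m n, 2 * x * B m n =
      B (m + 1) n + (1 - q ^ m) • B (m - 1) n + (q ^ m * (1 - q ^ n)) • B m (n - 1)) :
    ∀ m n, B m n = P (m + n) := by
  intro m
  induction m using Nat.strong_induction_on with
  | _ m ih =>
    intro n
    cases m with
    | zero => simpa using hB0 n
    | succ m =>
      have hprev : B m n = P (m + n) := ih m (by omega) n
      have hleft : (1 - q ^ m) • B (m - 1) n = (1 - q ^ m) • P (m + n - 1) :=
        one_sub_pow_smul_congr q fun hm => by rw [ih (m - 1) (by omega) n]; congr 1; omega
      have hdown : (1 - q ^ n) • B m (n - 1) = (1 - q ^ n) • P (m + n - 1) :=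
        one_sub_pow_smul_congr q fun hn => by rw [ih m (by omega) (n - 1)]; congr 1; omega
      have hsum : (1 - q ^ m) • B (m - 1) n + (q ^ m * (1 - q ^ n)) • B m (n - 1)
          = (1 - q ^ (m + n)) • P (m + n - 1) := by
        rw [mul_smul, hleft, hdown, ← mul_smul, ← add_smul,
          one_sub_pow_add_pow_mul_one_sub_pow]
      have hstep := hB m n
      rw [hprev, add_assoc, hsum, hP] at hstep
      rw [show m + 1 + n = m + n + 1 by omega]
      exact (add_left_inj _).mp hstep.symm

end Recurrence

/-- specializing the bivariate continuous q-Hermite polynomials at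
`r = 1` and `y = x` gives `H_{m,n}(x,x;q,1) = H_{m+n}(x;q)`. -/
theorem stmt16 (r : RatFunc ℚ) (hr : r = 1)
    (H : ℕ → Polynomial (RatFunc ℚ))
    (h0 : H 0 = 1) (h1 : H 1 = 2 * X)
    (hrec : ∀ k : ℕ, 1 ≤ k →
      2 * X * H k = H (k + 1) + C (1 - (RatFunc.X : RatFunc ℚ) ^ k) * H (k - 1))
    (Hb : ℕ → ℕ → MvPolynomial (Fin 2) (RatFunc ℚ))
    (hHb0 : ∀ n, Hb 0 n =
      Polynomial.aeval (MvPolynomial.X 1 : MvPolynomial (Fin 2) (RatFunc ℚ)) (H n))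
    (hHbrec : ∀ m n : ℕ,
      2 * MvPolynomial.X 0 * Hb m n =
        Hb (m + 1) n
        + (if m = 0 then 0 else
            MvPolynomial.C (1 - (RatFunc.X : RatFunc ℚ) ^ m) * Hb (m - 1) n)
        + (if n = 0 then 0 else
            MvPolynomial.C ((RatFunc.X : RatFunc ℚ) ^ m *
              (1 - (RatFunc.X : RatFunc ℚ) ^ n) * r) * Hb m (n - 1))) :
    ∀ m n : ℕ,
      MvPolynomial.aeval (fun _ : Fin 2 => (X : Polynomial (RatFunc ℚ))) (Hb m n)
        = H (m + n) := by
  subst hr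
  set q : RatFunc ℚ := RatFunc.X
  set diag :=
    MvPolynomial.aeval (R := RatFunc ℚ) (fun _ : Fin 2 => (X : Polynomial (RatFunc ℚ)))
  refine eq_add_of_bivariate_qHermite_recurrence q (X : (RatFunc ℚ)[X]) H ?_
    (fun m n => diag (Hb m n)) ?_ ?_
  · intro k
    rcases Nat.eq_zero_or_pos k with rfl | hk
    · simp [h0, h1]
    · rw [hrec k hk, smul_eq_C_mul]
  · intro n
    rw [hHb0, ← Polynomial.aeval_algHom_apply]
    simp [diag]
  · intro m n
    have hX : diag (MvPolynomial.X 0) = X := MvPolynomial.aeval_X _ _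
    have h := hHbrec m n
    simp only [mul_one, MvPolynomial.C_mul'] at h
    apply_fun diag at h
    simp only [map_add, map_mul, map_ofNat, map_smul, apply_ite diag, map_zero, hX] at h
    rw [h]
    split_ifs with hm hn hn <;> simp [hm, hn]
end

section
/- The bivariate continuous q-Hermite polynomials admit the expansion H_{m,n}(x,y;q,r) = Σ_{k=0}^{min(m,n)} ((-1)^k q^{k(k-1)/2} (q;q)_m (q;q)_n r^k)/((q;q)_{m-k}(q;q)_{n-k}(q;q)_k) · H_{m-k}(x;q) H_{n-k}(y;q), where H_j(x;q) are the univariate continuous q-Hermite polynomials. -/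
/-
Both sides satisfy the recurrence in `m`, which determines `H_{m,n}` from `H_{0,n} = H_n(y)`.
For the expansion, multiplication by `2x` acts on the factor `H_{m-k}(x)` through the univariate
recurrence; the resulting two sums regroup into `H_{m+1,n}`, `H_{m-1,n}` and `H_{m,n-1}` by two
q-Pascal-type identities for the coefficients, valid as soon as no `(q;q)_k` vanishes.
-/

open Polynomial Finset

noncomputable section

abbrev K17 : Type := RatFunc (RatFunc ℚ)

def q17 : K17 := RatFunc.C (RatFunc.X : RatFunc ℚ)

def r17 : K17 := RatFunc.X

def poch17 (k : ℕ) : K17 := ∏ j ∈ Icc 1 k, (1 - q17 ^ j)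

section Coeff
variable {K : Type*} [Field K]

def qPochhammer (q : K) (k : ℕ) : K := ∏ j ∈ Icc 1 k, (1 - q ^ j)

variable (q r : K)

@[simp] lemma qPochhammer_zero : qPochhammer q 0 = 1 := by simp [qPochhammer]

lemma qPochhammer_succ (k : ℕ) : qPochhammer q (k + 1) = qPochhammer q k * (1 - q ^ (k + 1)) :=
  prod_Icc_succ_top (by omega) _

def qHermiteCoeff (m n k : ℕ) : K :=
  (-1) ^ k * q ^ (k * (k - 1) / 2) * qPochhammer q m * qPochhammer q n * r ^ k /
    (qPochhammer q (m - k) * qPochhammer q (n - k) * qPochhammer q k)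

variable {q}

lemma qPochhammer_ne_zero (hq : ∀ j, 0 < j → q ^ j ≠ 1) (k : ℕ) : qPochhammer q k ≠ 0 :=
  prod_ne_zero_iff.2 fun j hj => sub_ne_zero.2 (hq j (mem_Icc.1 hj).1).symm

lemma one_sub_pow_succ_ne_zero (hq : ∀ k, qPochhammer q k ≠ 0) (k : ℕ) :
    1 - q ^ (k + 1) ≠ 0 :=
  right_ne_zero_of_mul (qPochhammer_succ q k ▸ hq (k + 1))

lemma qHermiteCoeff_zero (hq : ∀ k, qPochhammer q k ≠ 0) (m n : ℕ) :
    qHermiteCoeff q r m n 0 = 1 := by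
  simp [qHermiteCoeff, hq]

lemma qHermiteCoeff_succ_left_mul (hq : ∀ k, qPochhammer q k ≠ 0) {m k : ℕ} (hk : k ≤ m)
    (n : ℕ) :
    qHermiteCoeff q r (m + 1) n k * (1 - q ^ (m + 1 - k)) =
      (1 - q ^ (m + 1)) * qHermiteCoeff q r m n k := by
  obtain ⟨a, rfl⟩ := Nat.exists_eq_add_of_le hk
  have hsub : k + a + 1 - k = a + 1 := by omega
  simp only [qHermiteCoeff, hsub, Nat.add_sub_cancel_left, qPochhammer_succ]
  field_simp [hq, one_sub_pow_succ_ne_zero hq]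

/- For `k = m` the right side is the coefficient of index `m + 1 > m`, which vanishes when
`1 / (q;q)_{-1}` is read as `0`. -/
lemma qHermiteCoeff_succ_succ_add (hq : ∀ k, qPochhammer q k ≠ 0) {m k : ℕ} (hk : k ≤ m)
    (n : ℕ) :
    qHermiteCoeff q r (m + 1) (n + 1) (k + 1) +
        q ^ m * (1 - q ^ (n + 1)) * r * qHermiteCoeff q r m n k =
      if k < m then qHermiteCoeff q r m (n + 1) (k + 1) else 0 := by
  rcases hk.lt_or_eq with hk | rfl
  · obtain ⟨a, rfl⟩ := Nat.exists_eq_add_of_lt hk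
    have h1 : k + a + 1 + 1 - (k + 1) = a + 1 := by omega
    have h2 : k + a + 1 - (k + 1) = a := by omega
    have h3 : k + a + 1 - k = a + 1 := by omega
    simp only [qHermiteCoeff, hk, if_true, h1, h2, h3, Nat.add_sub_add_right, Nat.triangle_succ,
      qPochhammer_succ]
    field_simp [hq, one_sub_pow_succ_ne_zero hq]
    ring
  · simp only [qHermiteCoeff, lt_irrefl, if_false, Nat.sub_self, Nat.add_sub_add_right,
      Nat.triangle_succ, qPochhammer_succ]
    field_simp [hq, one_sub_pow_succ_ne_zero hq]
    ring

end Coeff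

section Expansion
variable {K A : Type*} [Field K] [CommRing A] [Algebra K A]

def qHermiteExpansion (q r : K) (Hx Hy : ℕ → A) (m n : ℕ) : A :=
  ∑ k ∈ range (min m n + 1), algebraMap K A (qHermiteCoeff q r m n k) * Hx (m - k) * Hy (n - k)

def IsBivariateQHermite (q r : K) (x : A) (F : ℕ → ℕ → A) : Prop :=
  ∀ m n : ℕ, 2 * x * F m n =
    F (m + 1) n
    + (if m = 0 then 0 else algebraMap K A (1 - q ^ m) * F (m - 1) n)
    + (if n = 0 then 0 else algebraMap K A (q ^ m * (1 - q ^ n) * r) * F m (n - 1))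

lemma IsBivariateQHermite.unique {q r : K} {x : A} {F F' : ℕ → ℕ → A}
    (hF : IsBivariateQHermite q r x F) (hF' : IsBivariateQHermite q r x F') (h0 : F 0 = F' 0) :
    F = F' := by
  funext m
  induction m using Nat.strong_induction_on with
  | _ m ih =>
    rcases m with _ | m
    · exact h0
    · funext n
      have e := hF m n
      rw [ih m (by omega), ih (m - 1) (by omega)] at e
      linear_combination hF' m n - e

variable {q : K} (r : K) (Hx Hy : ℕ → A)

lemma qHermiteExpansion_zero_left (hq : ∀ k, qPochhammer q k ≠ 0) (n : ℕ) :
    qHermiteExpansion q r Hx Hy 0 n = Hx 0 * Hy n := by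
  simp [qHermiteExpansion, qHermiteCoeff_zero r hq]

lemma qHermiteExpansion_lower (hq : ∀ k, qPochhammer q k ≠ 0) (m n : ℕ) :
    ∑ k ∈ range (min (m + 1) n + 1),
        algebraMap K A (qHermiteCoeff q r (m + 1) n k * (1 - q ^ (m + 1 - k))) *
          Hx (m - k) * Hy (n - k) =
      algebraMap K A (1 - q ^ (m + 1)) * qHermiteExpansion q r Hx Hy m n := by
  rw [qHermiteExpansion, mul_sum]
  symm
  apply sum_subset_zero_on_sdiff (range_subset_range.2 (by omega))
  · intro k hk
    simp only [mem_sdiff, mem_range] at hk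
    rw [show m + 1 - k = 0 by omega]
    simp
  · intro k hk
    rw [qHermiteCoeff_succ_left_mul r hq (by simp at hk; omega), map_mul]
    ring

lemma qHermiteExpansion_raise (hq : ∀ k, qPochhammer q k ≠ 0) (m n : ℕ) :
    ∑ k ∈ range (min m (n + 1) + 1),
        algebraMap K A (qHermiteCoeff q r m (n + 1) k) * Hx (m + 1 - k) * Hy (n + 1 - k) =
      qHermiteExpansion q r Hx Hy (m + 1) (n + 1) +
        algebraMap K A (q ^ m * (1 - q ^ (n + 1)) * r) * qHermiteExpansion q r Hx Hy m n := by
  have hshift : ∀ k ∈ range (min m n + 1),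
      algebraMap K A (qHermiteCoeff q r (m + 1) (n + 1) (k + 1)) * Hx (m - k) * Hy (n - k) +
        algebraMap K A (q ^ m * (1 - q ^ (n + 1)) * r) *
          (algebraMap K A (qHermiteCoeff q r m n k) * Hx (m - k) * Hy (n - k)) =
      if k < m then algebraMap K A (qHermiteCoeff q r m (n + 1) (k + 1)) * Hx (m - k) * Hy (n - k)
      else 0 := by
    intro k hk
    have hc := congrArg (fun c => algebraMap K A c * Hx (m - k) * Hy (n - k))
      (qHermiteCoeff_succ_succ_add r hq (m := m) (k := k) (by simp at hk; omega) n)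
    simp only [map_add, map_mul, apply_ite (algebraMap K A), map_zero] at hc ⊢
    split_ifs at hc ⊢ <;> linear_combination hc
  have hrange : (range (min m n + 1)).filter (· < m) = range (min m (n + 1)) := by
    ext k; simp; omega
  rw [qHermiteExpansion, qHermiteExpansion, min_add_add_right, sum_range_succ' _ (min m (n + 1)),
    sum_range_succ' _ (min m n + 1), mul_sum, add_right_comm, ← sum_add_distrib]
  simp only [Nat.add_sub_add_right]
  rw [sum_congr rfl hshift, ← sum_filter, hrange]
  simp [qHermiteCoeff_zero r hq]

/- In `hHx 0` the junk term `Hx (0 - 1)` carries the factor `1 - q ^ 0 = 0`. -/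
lemma isBivariateQHermite_qHermiteExpansion (hq : ∀ k, qPochhammer q k ≠ 0) (x : A)
    (hHx : ∀ j, 2 * x * Hx j = Hx (j + 1) + algebraMap K A (1 - q ^ j) * Hx (j - 1)) :
    IsBivariateQHermite q r x (qHermiteExpansion q r Hx Hy) := by
  intro m n
  have hsplit : 2 * x * qHermiteExpansion q r Hx Hy m n =
      ∑ k ∈ range (min m n + 1),
          algebraMap K A (qHermiteCoeff q r m n k) * Hx (m + 1 - k) * Hy (n - k) +
        ∑ k ∈ range (min m n + 1),
          algebraMap K A (qHermiteCoeff q r m n k * (1 - q ^ (m - k))) *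
            Hx (m - k - 1) * Hy (n - k) := by
    rw [qHermiteExpansion, mul_sum, ← sum_add_distrib]
    refine sum_congr rfl fun k hk => ?_
    rw [show m + 1 - k = m - k + 1 by simp at hk; omega, map_mul]
    linear_combination (algebraMap K A (qHermiteCoeff q r m n k) * Hy (n - k)) * hHx (m - k)
  have hlower : ∑ k ∈ range (min m n + 1),
      algebraMap K A (qHermiteCoeff q r m n k * (1 - q ^ (m - k))) * Hx (m - k - 1) * Hy (n - k) =
      if m = 0 then 0 else algebraMap K A (1 - q ^ m) * qHermiteExpansion q r Hx Hy (m - 1) n := by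
    cases m with
    | zero => simp
    | succ m => simpa [Nat.sub_sub] using qHermiteExpansion_lower r Hx Hy hq m n
  have hraise : ∑ k ∈ range (min m n + 1),
      algebraMap K A (qHermiteCoeff q r m n k) * Hx (m + 1 - k) * Hy (n - k) =
      qHermiteExpansion q r Hx Hy (m + 1) n + if n = 0 then 0 else
        algebraMap K A (q ^ m * (1 - q ^ n) * r) * qHermiteExpansion q r Hx Hy m (n - 1) := by
    cases n with
    | zero => simp [qHermiteExpansion, qHermiteCoeff_zero r hq]
    | succ n => simpa using qHermiteExpansion_raise r Hx Hy hq m n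
  rw [hsplit, hlower, hraise]
  ring

end Expansion

lemma q17_pow_ne_one {j : ℕ} (hj : 0 < j) : q17 ^ j ≠ 1 := by
  rw [q17, ← map_pow, ← map_one RatFunc.C, RatFunc.C_injective.ne_iff, ← RatFunc.algebraMap_X,
    ← map_pow, ← map_one (algebraMap ℚ[X] _), (RatFunc.algebraMap_injective ℚ).ne_iff]
  intro h
  simpa [hj.ne'] using congrArg natDegree h

/-- expansion of the bivariate continuous q-Hermite polynomials
in terms of the univariate ones. -/
theorem stmt17 (H : ℕ → Polynomial K17)
    (h0 : H 0 = 1) (h1 : H 1 = 2 * X)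
    (hrec : ∀ k : ℕ, 1 ≤ k →
      2 * X * H k = H (k + 1) + C (1 - q17 ^ k) * H (k - 1))
    (Hb : ℕ → ℕ → MvPolynomial (Fin 2) K17)
    (hHb0 : ∀ n, Hb 0 n =
      Polynomial.aeval (MvPolynomial.X 1 : MvPolynomial (Fin 2) K17) (H n))
    (hHbrec : ∀ m n : ℕ,
      2 * MvPolynomial.X 0 * Hb m n =
        Hb (m + 1) n
        + (if m = 0 then 0 else MvPolynomial.C (1 - q17 ^ m) * Hb (m - 1) n)
        + (if n = 0 then 0 else
            MvPolynomial.C (q17 ^ m * (1 - q17 ^ n) * r17) * Hb m (n - 1))) :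
    ∀ m n : ℕ, Hb m n = ∑ k ∈ range (min m n + 1),
      MvPolynomial.C (((-1 : K17) ^ k * q17 ^ (k * (k - 1) / 2) *
          poch17 m * poch17 n * r17 ^ k) /
          (poch17 (m - k) * poch17 (n - k) * poch17 k))
        * Polynomial.aeval (MvPolynomial.X 0 : MvPolynomial (Fin 2) K17) (H (m - k))
        * Polynomial.aeval (MvPolynomial.X 1 : MvPolynomial (Fin 2) K17) (H (n - k)) := by
  have hH : ∀ j, 2 * X * H j = H (j + 1) + C (1 - q17 ^ j) * H (j - 1) := by
    rintro (_ | j)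
    · simp [h0, h1]
    · exact hrec (j + 1) j.succ_pos
  have hHx : ∀ j, 2 * MvPolynomial.X 0 * aeval (MvPolynomial.X 0) (H j) =
      aeval (MvPolynomial.X 0) (H (j + 1)) +
        algebraMap K17 (MvPolynomial (Fin 2) K17) (1 - q17 ^ j) *
          aeval (MvPolynomial.X 0) (H (j - 1)) := fun j => by
    simpa [map_ofNat] using congrArg (aeval (MvPolynomial.X 0 : MvPolynomial (Fin 2) K17)) (hH j)
  have hq : ∀ k, qPochhammer q17 k ≠ 0 := qPochhammer_ne_zero fun _ => q17_pow_ne_one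
  have hHb : IsBivariateQHermite q17 r17 (MvPolynomial.X 0) Hb := hHbrec
  have hexp := isBivariateQHermite_qHermiteExpansion r17 _
    (fun n => aeval (MvPolynomial.X 1 : MvPolynomial (Fin 2) K17) (H n)) hq _ hHx
  have hHb_eq := hHb.unique hexp <| funext fun n => by
    simp [hHb0, qHermiteExpansion_zero_left _ _ _ hq, h0]
  intro m n
  rw [hHb_eq]
  rfl
end
end

section
/- Let A = ⊕_{j∈ℕ} A_j be an ℕ-graded associative algebra over a field K, generated in degrees 0 and 1, and let ∗ be a 0-equivariant star product on A (an associative K-bilinear product with a∗b − ab ∈ A_{<m+n} for a ∈ A_m, b ∈ A_n, and a∗h = ah, h∗a = ha for h ∈ A_0). Then ∗ is uniquely determined by the maps μ^L_f: A → A, μ^L_f(a) = f∗a − fa, for f ∈ A_1. That is, if ∗ and ∗' are two 0-equivariant star products on A with f∗a − fa = f∗'a − fa for all f ∈ A_1, a ∈ A, then ∗ = ∗'. -/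
/-!
The set `S` of `b` with `b ∗ · = b ∗' ·` is a subspace (left linearity) containing `A₀` (equivariance)
and `A₁` (hypothesis), and it is closed under `∗` by associativity of both products. For homogeneous
`y, z ∈ S` of degrees `p, q` we have `y z = y ∗ z - (y ∗ z - y z)` with the correction of degree
`< p + q`, so by strong induction on the degree every monomial in `A₀ ∪ A₁` lies in `S`; projecting
to graded components, so does every `Aₙ`.
-/

open DirectSum

section Graded

variable {ι R A : Type*} [DecidableEq ι] [CommSemiring R]

theorem DirectSum.IsInternal.one_mem_zero [AddLeftCancelMonoid ι] [Semiring A] [Algebra R A]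
    {𝒜 : ι → Submodule R A} (hint : IsInternal 𝒜)
    (hmul : ∀ m n, ∀ a ∈ 𝒜 m, ∀ b ∈ 𝒜 n, a * b ∈ 𝒜 (m + n)) : (1 : A) ∈ 𝒜 0 := by
  classical
  let := hint.chooseDecomposition
  set s := (decompose 𝒜 (1 : A)).support
  set e : ι → A := fun j => (decompose 𝒜 (1 : A) j : A)
  have hsum : ∑ i ∈ s, e i = 1 := sum_support_decompose 𝒜 1
  have he_of_notMem : ∀ j ∉ s, e j = 0 := fun j hj => by
    simp [e, DFinsupp.notMem_support_iff.mp hj]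
  -- `a * e j` is the component of degree `m + j` of `a = ∑ i, a * e i`
  have hhom_mul_e : ∀ m, ∀ a ∈ 𝒜 m, ∀ j ≠ 0, a * e j = 0 := by
    intro m a ha j hj
    by_cases hjs : j ∉ s
    · simp [he_of_notMem j hjs]
    have hterm : ∀ i, (decompose 𝒜 (a * e i) (m + j) : A) = if i = j then a * e j else 0 := by
      intro i
      split_ifs with hij
      · exact hij ▸ decompose_of_mem_same 𝒜 (hmul _ _ a ha _ (SetLike.coe_mem _))
      · exact decompose_of_mem_ne 𝒜 (hmul _ _ a ha _ (SetLike.coe_mem _)) (by simpa using hij)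
    have hcomp := congrArg (fun x => (decompose 𝒜 x (m + j) : A))
      (show a = ∑ i ∈ s, a * e i by rw [← Finset.mul_sum, hsum, mul_one])
    simp only [decompose_sum, DirectSum.sum_apply, AddSubmonoidClass.coe_finsetSum,
      hterm, Finset.sum_ite_eq', if_pos (not_not.mp hjs)] at hcomp
    rw [← hcomp, decompose_of_mem_ne 𝒜 ha (by simpa using hj)]
  have hmul_e : ∀ a : A, ∀ j ≠ 0, a * e j = 0 := by
    intro a j hj
    have ha : a ∈ ⨆ m, 𝒜 m := hint.submodule_iSup_eq_top ▸ Submodule.mem_top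
    induction ha using Submodule.iSup_induction' with
    | mem m a ha => exact hhom_mul_e m a ha j hj
    | zero => exact zero_mul _
    | add a b _ _ ha hb => rw [add_mul, ha, hb, add_zero]
  have he_zero : e 0 = 1 := by
    rw [← hsum, Finset.sum_eq_single 0 (fun j _ hj => by simpa using hmul_e 1 j hj)
      (fun h => by rw [he_of_notMem 0 h])]
  exact he_zero ▸ SetLike.coe_mem _

theorem DirectSum.Decomposition.le_of_span_eq_top [AddCommMonoid A] [Module R A]
    (𝒜 : ι → Submodule R A) [Decomposition 𝒜] {M : Set A} (hM : Submodule.span R M = ⊤)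
    {S : Submodule R A} {n : ι} (hS : ∀ x ∈ M, ∃ i, x ∈ 𝒜 i ∧ (i = n → x ∈ S)) : 𝒜 n ≤ S := by
  suffices hproj : ∀ b ∈ Submodule.span R M, (decompose 𝒜 b n : A) ∈ S from
    fun b hb => decompose_of_mem_same 𝒜 hb ▸ hproj b (hM ▸ Submodule.mem_top)
  intro b hb
  induction hb using Submodule.span_induction with
  | mem x hx =>
    obtain ⟨i, hxi, hxS⟩ := hS x hx
    by_cases hin : i = n
    · rw [decompose_of_mem_same 𝒜 (hin ▸ hxi)]; exact hxS hin
    · rw [decompose_of_mem_ne 𝒜 hxi hin]; exact S.zero_mem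
  | zero => simp
  | add x y _ _ hx hy => simpa [decompose_add] using S.add_mem hx hy
  | smul r x _ hx => simpa [decompose_smul, DirectSum.smul_apply] using S.smul_mem r hx

theorem Submodule.eq_top_of_mul_mem_of_isInternal [Semiring A] [Algebra R A]
    {𝒜 : ℕ → Submodule R A} (hint : IsInternal 𝒜)
    (hmul : ∀ m n, ∀ a ∈ 𝒜 m, ∀ b ∈ 𝒜 n, a * b ∈ 𝒜 (m + n))
    (hgen : Algebra.adjoin R ((𝒜 0 : Set A) ∪ (𝒜 1 : Set A)) = ⊤) {S : Submodule R A}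
    (h0 : 𝒜 0 ≤ S) (h1 : 𝒜 1 ≤ S)
    (hstep : ∀ p q, ∀ y ∈ 𝒜 p, ∀ z ∈ 𝒜 q, y ∈ S → z ∈ S → (∀ j < p + q, 𝒜 j ≤ S) → y * z ∈ S) :
    S = ⊤ := by
  classical
  let := hint.chooseDecomposition
  set M := Submonoid.closure ((𝒜 0 : Set A) ∪ (𝒜 1 : Set A))
  have hM : Submodule.span R (M : Set A) = ⊤ := by
    rw [← Algebra.adjoin_eq_span, hgen, Algebra.top_toSubmodule]
  have hdeg : ∀ n, 𝒜 n ≤ S := by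
    intro n
    induction n using Nat.strong_induction_on with | _ n ih => ?_
    have hmono : ∀ x ∈ M, ∃ p, x ∈ 𝒜 p ∧ (p ≤ n → x ∈ S) := by
      intro x hx
      induction hx using Submonoid.closure_induction with
      | mem x hx =>
        rcases hx with hx | hx
        · exact ⟨0, hx, fun _ => h0 hx⟩
        · exact ⟨1, hx, fun _ => h1 hx⟩
      | one => exact ⟨0, hint.one_mem_zero hmul, fun _ => h0 (hint.one_mem_zero hmul)⟩
      | mul y z _ _ hy hz =>
        obtain ⟨p, hyp, hyS⟩ := hy
        obtain ⟨q, hzq, hzS⟩ := hz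
        exact ⟨p + q, hmul p q y hyp z hzq, fun hpq => hstep p q y hyp z hzq (hyS (by omega))
          (hzS (by omega)) fun j hj => ih j (by omega)⟩
    refine Decomposition.le_of_span_eq_top 𝒜 hM fun x hx => ?_
    obtain ⟨p, hxp, hxS⟩ := hmono x hx
    exact ⟨p, hxp, fun hpn => hxS hpn.le⟩
  rw [eq_top_iff, ← hint.submodule_iSup_eq_top]
  exact iSup_le hdeg

end Graded

theorem op_eq_op_of_assoc {α : Type*} (s₁ s₂ : α → α → α)
    (h₁ : ∀ a b c, s₁ (s₁ a b) c = s₁ a (s₁ b c)) (h₂ : ∀ a b c, s₂ (s₂ a b) c = s₂ a (s₂ b c))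
    {y z : α} (hy : s₁ y = s₂ y) (hz : s₁ z = s₂ z) : s₁ (s₁ y z) = s₂ (s₁ y z) := by
  funext a
  rw [h₁, hz, hy, ← h₂, ← hy]

theorem stmt19_general {K : Type*} [Field K] {A : Type*} [Ring A] [Algebra K A]
    (𝒜 : ℕ → Submodule K A)
    (hinternal : DirectSum.IsInternal 𝒜)
    (hgradedmul : ∀ m n : ℕ, ∀ a ∈ 𝒜 m, ∀ b ∈ 𝒜 n, a * b ∈ 𝒜 (m + n))
    (hgen : Algebra.adjoin K ((𝒜 0 : Set A) ∪ (𝒜 1 : Set A)) = ⊤)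
    (s1 s2 : A → A → A)
    -- `s1` is K-bilinear
    (h1addl : ∀ a b c : A, s1 (a + b) c = s1 a c + s1 b c)
    (h1smull : ∀ (k : K) (a b : A), s1 (k • a) b = k • s1 a b)
    -- `s2` is K-bilinear
    (h2addl : ∀ a b c : A, s2 (a + b) c = s2 a c + s2 b c)
    (h2smull : ∀ (k : K) (a b : A), s2 (k • a) b = k • s2 a b)
    -- both are associative
    (h1assoc : ∀ a b c : A, s1 (s1 a b) c = s1 a (s1 b c))
    (h2assoc : ∀ a b c : A, s2 (s2 a b) c = s2 a (s2 b c))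
    -- both are star products: `a ∗ b - a b ∈ A_{< m+n}` for homogeneous `a`, `b`
    (h1filt : ∀ m n : ℕ, ∀ a ∈ 𝒜 m, ∀ b ∈ 𝒜 n, s1 a b - a * b ∈ ⨆ j < m + n, 𝒜 j)
    -- both are 0-equivariant
    (h1equiv : ∀ h ∈ 𝒜 0, ∀ a : A, s1 h a = h * a ∧ s1 a h = a * h)
    (h2equiv : ∀ h ∈ 𝒜 0, ∀ a : A, s2 h a = h * a ∧ s2 a h = a * h)
    -- the maps `μ^L_f` agree for all `f` of degree 1
    (heq : ∀ f ∈ 𝒜 1, ∀ a : A, s1 f a - f * a = s2 f a - f * a) :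
    s1 = s2 := by
  let L₁ : A →ₗ[K] A → A := ⟨⟨s1, fun a b => funext (h1addl a b)⟩, fun k a => funext (h1smull k a)⟩
  let L₂ : A →ₗ[K] A → A := ⟨⟨s2, fun a b => funext (h2addl a b)⟩, fun k a => funext (h2smull k a)⟩
  suffices htop : LinearMap.eqLocus L₁ L₂ = ⊤ from
    funext fun b => LinearMap.mem_eqLocus.mp (htop ▸ Submodule.mem_top : b ∈ LinearMap.eqLocus L₁ L₂)
  refine Submodule.eq_top_of_mul_mem_of_isInternal hinternal hgradedmul hgen
    (fun h hh => funext fun a => (h1equiv h hh a).1.trans (h2equiv h hh a).1.symm)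
    (fun f hf => funext fun a => sub_left_inj.mp (heq f hf a)) ?_
  intro p q y hy z hz hyS hzS hlower
  have hstar : s1 y z ∈ LinearMap.eqLocus L₁ L₂ := op_eq_op_of_assoc s1 s2 h1assoc h2assoc hyS hzS
  have hcorr : s1 y z - y * z ∈ LinearMap.eqLocus L₁ L₂ := iSup₂_le hlower (h1filt p q y hy z hz)
  simpa using sub_mem hstar hcorr

/-- a 0-equivariant star product on an ℕ-graded algebra generated
in degrees 0 and 1 is uniquely determined by the maps `μ^L_f(a) = f∗a - fa` for
`f` of degree 1: two such star products with the same maps coincide. -/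
theorem stmt19 {K : Type*} [Field K] {A : Type*} [Ring A] [Algebra K A]
    (𝒜 : ℕ → Submodule K A)
    (hinternal : DirectSum.IsInternal 𝒜)
    (hgradedmul : ∀ m n : ℕ, ∀ a ∈ 𝒜 m, ∀ b ∈ 𝒜 n, a * b ∈ 𝒜 (m + n))
    (hgen : Algebra.adjoin K ((𝒜 0 : Set A) ∪ (𝒜 1 : Set A)) = ⊤)
    (s1 s2 : A → A → A)
    -- `s1` is K-bilinear
    (h1addl : ∀ a b c : A, s1 (a + b) c = s1 a c + s1 b c)
    (h1addr : ∀ a b c : A, s1 a (b + c) = s1 a b + s1 a c)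
    (h1smull : ∀ (k : K) (a b : A), s1 (k • a) b = k • s1 a b)
    (h1smulr : ∀ (k : K) (a b : A), s1 a (k • b) = k • s1 a b)
    -- `s2` is K-bilinear
    (h2addl : ∀ a b c : A, s2 (a + b) c = s2 a c + s2 b c)
    (h2addr : ∀ a b c : A, s2 a (b + c) = s2 a b + s2 a c)
    (h2smull : ∀ (k : K) (a b : A), s2 (k • a) b = k • s2 a b)
    (h2smulr : ∀ (k : K) (a b : A), s2 a (k • b) = k • s2 a b)
    -- both are associative
    (h1assoc : ∀ a b c : A, s1 (s1 a b) c = s1 a (s1 b c))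
    (h2assoc : ∀ a b c : A, s2 (s2 a b) c = s2 a (s2 b c))
    -- both are star products: `a ∗ b - a b ∈ A_{< m+n}` for homogeneous `a`, `b`
    (h1filt : ∀ m n : ℕ, ∀ a ∈ 𝒜 m, ∀ b ∈ 𝒜 n, s1 a b - a * b ∈ ⨆ j < m + n, 𝒜 j)
    (h2filt : ∀ m n : ℕ, ∀ a ∈ 𝒜 m, ∀ b ∈ 𝒜 n, s2 a b - a * b ∈ ⨆ j < m + n, 𝒜 j)
    -- both are 0-equivariant
    (h1equiv : ∀ h ∈ 𝒜 0, ∀ a : A, s1 h a = h * a ∧ s1 a h = a * h)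
    (h2equiv : ∀ h ∈ 𝒜 0, ∀ a : A, s2 h a = h * a ∧ s2 a h = a * h)
    -- the maps `μ^L_f` agree for all `f` of degree 1
    (heq : ∀ f ∈ 𝒜 1, ∀ a : A, s1 f a - f * a = s2 f a - f * a) :
    s1 = s2 :=
  stmt19_general 𝒜 hinternal hgradedmul hgen s1 s2 h1addl h1smull h2addl h2smull h1assoc h2assoc
    h1filt h1equiv h2equiv heq
end
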